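/- Let K be a commutative ring and G be any group. The subgroup V_*(KG) is normal in V(KG) if and only if every element of the form xx* with x ∈ V(KG) is central in KG. -/

import Mathlib

/-- The augmentation homomorphism `χ : KG → K`. -/
noncomputable def aug (K G : Type*) [CommSemiring K] [Group G] :
    MonoidAlgebra K G →ₐ[K] K :=
  MonoidAlgebra.lift K K G 1

/-- The `K`-linear anti-automorphism of `KG` determined by `g ↦ g⁻¹`. -/
noncomputable def gstar {K G : Type*} [CommSemiring K] [Group G]
    (x : MonoidAlgebra K G) : MonoidAlgebra K G :=
  MonoidAlgebra.mapDomain (fun g : G => g⁻¹) x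

section aux
variable {K G : Type*} [CommSemiring K] [Group G]

lemma gstar_single (g : G) (a : K) :
    gstar (MonoidAlgebra.single g a) = MonoidAlgebra.single g⁻¹ a :=
  MonoidAlgebra.mapDomain_single

lemma gstar_zero : gstar (0 : MonoidAlgebra K G) = 0 := MonoidAlgebra.mapDomain_zero _

lemma gstar_add (a b : MonoidAlgebra K G) : gstar (a + b) = gstar a + gstar b :=
  MonoidAlgebra.mapDomain_add _ _ _

lemma gstar_one : gstar (1 : MonoidAlgebra K G) = 1 := by
  rw [MonoidAlgebra.one_def, gstar_single, inv_one]

lemma gstar_mul (a b : MonoidAlgebra K G) : gstar (a * b) = gstar b * gstar a := by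
  induction a using MonoidAlgebra.induction_linear with
  | zero => simp [gstar_zero]
  | add f g hf hg => rw [add_mul, gstar_add, hf, hg, gstar_add, mul_add]
  | single g r =>
    induction b using MonoidAlgebra.induction_linear with
    | zero => simp [gstar_zero]
    | add f g hf hg => rw [mul_add, gstar_add, hf, hg, gstar_add, add_mul]
    | single h s =>
      rw [MonoidAlgebra.single_mul_single, gstar_single, gstar_single, gstar_single,
        MonoidAlgebra.single_mul_single, mul_inv_rev, mul_comm s r]

/-- `gstar` of a unit, as a unit. -/
noncomputable def starUnit (u : (MonoidAlgebra K G)ˣ) : (MonoidAlgebra K G)ˣ where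
  val := gstar (u : MonoidAlgebra K G)
  inv := gstar ((u⁻¹ : (MonoidAlgebra K G)ˣ) : MonoidAlgebra K G)
  val_inv := by rw [← gstar_mul, Units.inv_mul, gstar_one]
  inv_val := by rw [← gstar_mul, Units.mul_inv, gstar_one]

lemma starUnit_mul (u v : (MonoidAlgebra K G)ˣ) :
    starUnit (u * v) = starUnit v * starUnit u :=
  Units.ext (by simp only [starUnit, Units.val_mul]; exact gstar_mul _ _)

lemma starUnit_one : starUnit (1 : (MonoidAlgebra K G)ˣ) = 1 :=
  Units.ext (by simp only [starUnit, Units.val_one]; exact gstar_one)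

lemma starUnit_inv (u : (MonoidAlgebra K G)ˣ) : starUnit u⁻¹ = (starUnit u)⁻¹ := by
  apply eq_inv_of_mul_eq_one_left
  rw [← starUnit_mul, mul_inv_cancel, starUnit_one]

lemma aug_gstar (a : MonoidAlgebra K G) : aug K G (gstar a) = aug K G a := by
  induction a using MonoidAlgebra.induction_linear with
  | zero => simp [gstar_zero]
  | add f g hf hg => rw [gstar_add, map_add, map_add, hf, hg]
  | single g r => simp [gstar_single, aug, MonoidAlgebra.lift_single]

end aux

/-- Corollary 1: for a commutative ring `K` and a group `G`, the subgroup
`V_*(KG)` is normal in `V(KG)` if and only if every element `xx*` with `x ∈ V(KG)` is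
central in `KG`. -/
theorem stmt5 (K G : Type*) [CommRing K] [Group G] :
    (∀ x y : (MonoidAlgebra K G)ˣ,
      aug K G (x : MonoidAlgebra K G) = 1 →
      aug K G (y : MonoidAlgebra K G) = 1 →
      gstar (y : MonoidAlgebra K G) = ((y⁻¹ : (MonoidAlgebra K G)ˣ) : MonoidAlgebra K G) →
      aug K G ((x⁻¹ * y * x : (MonoidAlgebra K G)ˣ) : MonoidAlgebra K G) = 1 ∧
      gstar ((x⁻¹ * y * x : (MonoidAlgebra K G)ˣ) : MonoidAlgebra K G) =
        (((x⁻¹ * y * x)⁻¹ : (MonoidAlgebra K G)ˣ) : MonoidAlgebra K G)) ↔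
    (∀ x : (MonoidAlgebra K G)ˣ, aug K G (x : MonoidAlgebra K G) = 1 →
      (x : MonoidAlgebra K G) * gstar (x : MonoidAlgebra K G) ∈
        Set.center (MonoidAlgebra K G)) := by
  constructor
  · -- normality → centrality
    intro H x hx
    rw [Semigroup.mem_center_iff]
    suffices key : ∀ g : G,
        MonoidAlgebra.single g (1 : K) * ((x : MonoidAlgebra K G) * gstar (x : MonoidAlgebra K G))
          = ((x : MonoidAlgebra K G) * gstar (x : MonoidAlgebra K G))
              * MonoidAlgebra.single g (1 : K) by
      intro z
      induction z using MonoidAlgebra.induction_linear with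
      | zero => simp
      | add f g hf hg => rw [add_mul, mul_add, hf, hg]
      | single g r =>
        have h1 : (MonoidAlgebra.single g r : MonoidAlgebra K G)
            = r • MonoidAlgebra.single g (1 : K) := by
          rw [MonoidAlgebra.smul_single', mul_one]
        rw [h1, smul_mul_assoc, mul_smul_comm, key g]
    intro g
    set u : (MonoidAlgebra K G)ˣ :=
      ⟨MonoidAlgebra.single g⁻¹ 1, MonoidAlgebra.single g 1,
        by rw [MonoidAlgebra.single_mul_single, inv_mul_cancel, one_mul, MonoidAlgebra.one_def],
        by rw [MonoidAlgebra.single_mul_single, mul_inv_cancel, one_mul,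
          MonoidAlgebra.one_def]⟩ with hu
    have haug : aug K G (u : MonoidAlgebra K G) = 1 := by
      simp [hu, aug, MonoidAlgebra.lift_single]
    have hstar : gstar (u : MonoidAlgebra K G)
        = ((u⁻¹ : (MonoidAlgebra K G)ˣ) : MonoidAlgebra K G) := by
      simp [hu, gstar_single]
    obtain ⟨-, h2⟩ := H x u hx haug hstar
    have e1 : ((x⁻¹ * u * x : (MonoidAlgebra K G)ˣ) : MonoidAlgebra K G)
        = ((x⁻¹ : (MonoidAlgebra K G)ˣ) : MonoidAlgebra K G)
          * ((u : MonoidAlgebra K G) * (x : MonoidAlgebra K G)) := by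
      rw [Units.val_mul, Units.val_mul, mul_assoc]
    have e2 : (((x⁻¹ * u * x)⁻¹ : (MonoidAlgebra K G)ˣ) : MonoidAlgebra K G)
        = ((x⁻¹ : (MonoidAlgebra K G)ˣ) : MonoidAlgebra K G)
          * (((u⁻¹ : (MonoidAlgebra K G)ˣ) : MonoidAlgebra K G) * (x : MonoidAlgebra K G)) := by
      rw [mul_inv_rev, mul_inv_rev, inv_inv, Units.val_mul, Units.val_mul]
    rw [e1, e2, gstar_mul, gstar_mul] at h2
    have hu' : gstar (u : MonoidAlgebra K G) = MonoidAlgebra.single g 1 := by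
      simp [hu, gstar_single]
    have huinv : ((u⁻¹ : (MonoidAlgebra K G)ˣ) : MonoidAlgebra K G)
        = MonoidAlgebra.single g 1 := rfl
    rw [hu', huinv] at h2
    -- h2 : gstar ↑x * single g 1 * gstar ↑x⁻¹ = ↑x⁻¹ * (single g 1 * ↑x)
    calc MonoidAlgebra.single g (1 : K)
          * ((x : MonoidAlgebra K G) * gstar (x : MonoidAlgebra K G))
        = ((x : MonoidAlgebra K G) * ((x⁻¹ : (MonoidAlgebra K G)ˣ) : MonoidAlgebra K G))
            * (MonoidAlgebra.single g 1
              * ((x : MonoidAlgebra K G) * gstar (x : MonoidAlgebra K G))) := by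
          rw [Units.mul_inv, one_mul]
      _ = (x : MonoidAlgebra K G)
            * (((x⁻¹ : (MonoidAlgebra K G)ˣ) : MonoidAlgebra K G)
              * (MonoidAlgebra.single g 1 * (x : MonoidAlgebra K G)))
            * gstar (x : MonoidAlgebra K G) := by
          simp only [mul_assoc]
      _ = (x : MonoidAlgebra K G)
            * (gstar (x : MonoidAlgebra K G) * MonoidAlgebra.single g 1
              * gstar (((x⁻¹ : (MonoidAlgebra K G)ˣ) : MonoidAlgebra K G)))
            * gstar (x : MonoidAlgebra K G) := by
          rw [h2]
      _ = ((x : MonoidAlgebra K G) * gstar (x : MonoidAlgebra K G))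
            * MonoidAlgebra.single g 1
            * (gstar (((x⁻¹ : (MonoidAlgebra K G)ˣ) : MonoidAlgebra K G))
              * gstar (x : MonoidAlgebra K G)) := by
          simp only [mul_assoc]
      _ = ((x : MonoidAlgebra K G) * gstar (x : MonoidAlgebra K G))
            * MonoidAlgebra.single g 1 := by
          rw [← gstar_mul, Units.mul_inv, gstar_one, mul_one]
  · -- centrality → normality
    intro H x y hx hy hystar
    have hxinv : aug K G ((x⁻¹ : (MonoidAlgebra K G)ˣ) : MonoidAlgebra K G) = 1 := by
      have h0 : aug K G ((x : MonoidAlgebra K G)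
          * ((x⁻¹ : (MonoidAlgebra K G)ˣ) : MonoidAlgebra K G)) = 1 := by
        rw [Units.mul_inv, map_one]
      rwa [map_mul, hx, one_mul] at h0
    constructor
    · rw [Units.val_mul, Units.val_mul, map_mul, map_mul, hxinv, hy, hx]
      ring
    · set c : (MonoidAlgebra K G)ˣ := x * starUnit x with hc
      have hcc : (c : MonoidAlgebra K G) ∈ Set.center (MonoidAlgebra K G) := H x hx
      have hcomm : ∀ z : (MonoidAlgebra K G)ˣ, c * z = z * c := fun z => Units.ext (by
        rw [Units.val_mul, Units.val_mul]
        exact (Semigroup.mem_center_iff.mp hcc (z : MonoidAlgebra K G)).symm)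
      have hxs : starUnit x = x⁻¹ * c := by
        rw [hc, ← mul_assoc, inv_mul_cancel, one_mul]
      have hyinv : starUnit y = y⁻¹ := Units.ext hystar
      have key : starUnit (x⁻¹ * y * x) = (x⁻¹ * y * x)⁻¹ := by
        have hcy : c * y⁻¹ * c⁻¹ = y⁻¹ := by
          rw [hcomm y⁻¹, mul_assoc, mul_inv_cancel, mul_one]
        calc starUnit (x⁻¹ * y * x)
            = starUnit x * starUnit y * (starUnit x)⁻¹ := by
              rw [starUnit_mul, starUnit_mul, starUnit_inv, mul_assoc]
          _ = (x⁻¹ * c) * y⁻¹ * (x⁻¹ * c)⁻¹ := by rw [hxs, hyinv]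
          _ = x⁻¹ * (c * y⁻¹ * c⁻¹) * x := by group
          _ = (x⁻¹ * y * x)⁻¹ := by rw [hcy]; group
      exact congrArg Units.val key
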